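/- arXiv:2011.04419 — 4 statements merged into one kernel-verified Lean document; each statement's English description precedes it below -/
import Mathlib

section
/- Fix y ∈ {0,1} and set ȳ := 1 − y. Let D₀ and D₁ be probability measures on ℝ^d (class-conditional input distributions for labels 0 and 1), D_{x̃} a probability measure on ℝ^d, and D_α a probability measure on ℝ. Fix α ∈ ℝ and x̃ ∈ ℝ^d, a map δ : ℝ^d × ℝ^d → ℝ^d, an encoder h : ℝ^d → ℝ^m, and ζ : ℝ^m → ℝ with ζ(h(z)) ≠ 0 for all z ∈ ℝ^d, and define sim[q, q'] := qᵀq'/(ζ(q)ζ(q')). Given independent draws x ∼ D_y, x̄ ∼ D_{1−y}, x̃', x̃'' ∼ D_{x̃}, α', α'' ∼ D_α, set x⁺ := x + α·δ(x, x̃), x⁺⁺ := x + α'·δ(x, x̃'), x⁻ := x̄ + α''·δ(x̄, x̃''), and w̃ := h(a)/ζ(h(a)) − h(b)/ζ(h(b)), where a := x⁺⁺ and b := x⁻ if y = 1, and a := x⁻ and b := x⁺⁺ if y = 0. Then, assuming all the expectations below are finite, E[ ℓ_cont(x⁺, x⁺⁺, x⁻) ] = E[ ℓ( h(x⁺)ᵀ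 w̃ / ζ(h(x⁺)), y ) ], where both expectations are over x ∼ D_y, x̄ ∼ D_{1−y}, x̃', x̃'' ∼ D_{x̃}, α', α'' ∼ D_α. -/
open MeasureTheory

/-- The binary cross-entropy loss. -/
noncomputable def bce (q y : ℝ) : ℝ :=
  -y * Real.log (1 / (1 + Real.exp (-q))) -
    (1 - y) * Real.log (1 - 1 / (1 + Real.exp (-q)))

/-- The similarity `sim[q,q'] = qᵀq'/(ζ(q)ζ(q'))`. -/
noncomputable def simZ {m : ℕ} (ζ : (Fin m → ℝ) → ℝ) (q q' : Fin m → ℝ) : ℝ :=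
  (∑ k, q k * q' k) / (ζ q * ζ q')

/-- The contrastive loss built from an encoder `h` and a similarity function `sim`. -/
noncomputable def lcont {d m : ℕ} (h : (Fin d → ℝ) → (Fin m → ℝ))
    (sim : (Fin m → ℝ) → (Fin m → ℝ) → ℝ) (xp xpp xm : Fin d → ℝ) : ℝ :=
  -Real.log (Real.exp (sim (h xp) (h xpp)) /
    (Real.exp (sim (h xp) (h xpp)) + Real.exp (sim (h xp) (h xm))))

/-- The classification loss `ℓ( h(x⁺)ᵀ w̃ / ζ(h(x⁺)), y )`, where
`w̃ = h(a)/ζ(h(a)) − h(b)/ζ(h(b))` with `a := x⁺⁺, b := x⁻` if `y = 1` and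
`a := x⁻, b := x⁺⁺` if `y = 0`. -/
noncomputable def clsLoss {d m : ℕ} (h : (Fin d → ℝ) → (Fin m → ℝ))
    (ζ : (Fin m → ℝ) → ℝ) (y : ℝ) (xp xpp xm : Fin d → ℝ) : ℝ :=
  let a := if y = 1 then xpp else xm
  let b := if y = 1 then xm else xpp
  let wt := (ζ (h a))⁻¹ • h a - (ζ (h b))⁻¹ • h b
  bce ((∑ k, h xp k * wt k) / ζ (h xp)) y

/-- Sample space for `(x, x̄, x̃', x̃'', α', α'')`. -/
abbrev Omega6 (d : ℕ) : Type :=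
  (Fin d → ℝ) × (Fin d → ℝ) × (Fin d → ℝ) × (Fin d → ℝ) × ℝ × ℝ

/-- `x⁺ := x + α·δ(x, x̃)`. -/
def XP {d : ℕ} (α : ℝ) (xt : Fin d → ℝ)
    (δ : (Fin d → ℝ) → (Fin d → ℝ) → (Fin d → ℝ)) (p : Omega6 d) : Fin d → ℝ :=
  p.1 + α • δ p.1 xt

/-- `x⁺⁺ := x + α'·δ(x, x̃')`. -/
def XPP {d : ℕ} (δ : (Fin d → ℝ) → (Fin d → ℝ) → (Fin d → ℝ)) (p : Omega6 d) : Fin d → ℝ :=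
  p.1 + p.2.2.2.2.1 • δ p.1 p.2.2.1

/-- `x⁻ := x̄ + α''·δ(x̄, x̃'')`. -/
def XM {d : ℕ} (δ : (Fin d → ℝ) → (Fin d → ℝ) → (Fin d → ℝ)) (p : Omega6 d) : Fin d → ℝ :=
  p.2.1 + p.2.2.2.2.2 • δ p.2.1 p.2.2.2.1

/-! The identity already holds pointwise. Writing `s = sim[h(x⁺), h(x⁺⁺)]` and
`t = sim[h(x⁺), h(x⁻)]`, the contrastive loss is `log (1 + exp (t - s))`, the logit
`h(x⁺)ᵀ w̃ / ζ(h(x⁺))` is `s - t` for `y = 1` and `t - s` for `y = 0`, and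
`ℓ(q, 1) = log (1 + exp (-q))`, `ℓ(q, 0) = log (1 + exp q)`. -/

lemma neg_log_exp_div_exp_add_exp (s t : ℝ) :
    -Real.log (Real.exp s / (Real.exp s + Real.exp t)) = Real.log (1 + Real.exp (t - s)) := by
  have hsum : Real.exp s + Real.exp t = Real.exp s * (1 + Real.exp (t - s)) := by
    rw [mul_add, mul_one, ← Real.exp_add, add_sub_cancel]
  rw [hsum, div_mul_cancel_left₀ (Real.exp_ne_zero s), Real.log_inv, neg_neg]

lemma bce_one (q : ℝ) : bce q 1 = Real.log (1 + Real.exp (-q)) := by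
  simp only [bce, one_div, Real.log_inv, sub_self, zero_mul, sub_zero, neg_mul, one_mul, neg_neg]

lemma bce_zero (q : ℝ) : bce q 0 = Real.log (1 + Real.exp q) := by
  have hcompl : 1 - 1 / (1 + Real.exp (-q)) = (1 + Real.exp q)⁻¹ := by
    rw [Real.exp_neg]
    field_simp
    ring
  simp only [bce, hcompl, Real.log_inv, neg_zero, zero_mul, sub_zero, one_mul, zero_sub, neg_neg]

lemma sum_mul_sub_smul_div_eq_simZ_sub {m : ℕ} (ζ : (Fin m → ℝ) → ℝ) {q u v : Fin m → ℝ}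
    (hq : ζ q ≠ 0) (hu : ζ u ≠ 0) (hv : ζ v ≠ 0) :
    (∑ k, q k * ((ζ u)⁻¹ • u - (ζ v)⁻¹ • v) k) / ζ q = simZ ζ q u - simZ ζ q v := by
  simp only [simZ, Pi.sub_apply, Pi.smul_apply, smul_eq_mul, mul_sub, Finset.sum_sub_distrib,
    mul_left_comm _ (ζ u)⁻¹, mul_left_comm _ (ζ v)⁻¹, ← Finset.mul_sum]
  field_simp

lemma lcont_simZ_eq_clsLoss {d m : ℕ} {y : ℝ} (hy : y = 0 ∨ y = 1)
    (h : (Fin d → ℝ) → (Fin m → ℝ)) (ζ : (Fin m → ℝ) → ℝ) (hζ : ∀ z, ζ (h z) ≠ 0)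
    (xp xpp xm : Fin d → ℝ) :
    lcont h (simZ ζ) xp xpp xm = clsLoss h ζ y xp xpp xm := by
  rw [lcont, neg_log_exp_div_exp_add_exp]
  rcases hy with rfl | rfl
  · simp only [clsLoss, zero_ne_one, if_false,
      sum_mul_sub_smul_div_eq_simZ_sub ζ (hζ xp) (hζ xm) (hζ xpp), bce_zero]
  · simp only [clsLoss, if_true,
      sum_mul_sub_smul_div_eq_simZ_sub ζ (hζ xp) (hζ xpp) (hζ xm), bce_one, neg_sub]

theorem stmt3_general {d m : ℕ} (y : ℝ) (hy : y = 0 ∨ y = 1)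
    (Dy D1my Dxt : Measure (Fin d → ℝ)) (Da : Measure ℝ)
    (α : ℝ) (xt : Fin d → ℝ)
    (δ : (Fin d → ℝ) → (Fin d → ℝ) → (Fin d → ℝ))
    (h : (Fin d → ℝ) → (Fin m → ℝ))
    (ζ : (Fin m → ℝ) → ℝ) (hζ : ∀ z, ζ (h z) ≠ 0) :
    ∫ p, lcont h (simZ ζ) (XP α xt δ p) (XPP δ p) (XM δ p)
        ∂(Dy.prod (D1my.prod (Dxt.prod (Dxt.prod (Da.prod Da)))))
      = ∫ p, clsLoss h ζ y (XP α xt δ p) (XPP δ p) (XM δ p)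
        ∂(Dy.prod (D1my.prod (Dxt.prod (Dxt.prod (Da.prod Da))))) := by
  simp only [lcont_simZ_eq_clsLoss hy h ζ hζ]

/-- Expectation of the contrastive loss (over `x ∼ D_y`, `x̄ ∼ D_{1−y}`, `x̃', x̃'' ∼ D_{x̃}`,
`α', α'' ∼ D_α`) equals the expectation of the classification loss `ℓ(h(x⁺)ᵀw̃/ζ(h(x⁺)), y)`. -/
theorem stmt3 {d m : ℕ} (y : ℝ) (hy : y = 0 ∨ y = 1)
    (Dy D1my Dxt : Measure (Fin d → ℝ)) (Da : Measure ℝ)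
    [IsProbabilityMeasure Dy] [IsProbabilityMeasure D1my] [IsProbabilityMeasure Dxt]
    [IsProbabilityMeasure Da]
    (α : ℝ) (xt : Fin d → ℝ)
    (δ : (Fin d → ℝ) → (Fin d → ℝ) → (Fin d → ℝ))
    (h : (Fin d → ℝ) → (Fin m → ℝ))
    (ζ : (Fin m → ℝ) → ℝ) (hζ : ∀ z, ζ (h z) ≠ 0)
    (hI1 : Integrable (fun p : Omega6 d => lcont h (simZ ζ) (XP α xt δ p) (XPP δ p) (XM δ p))
      (Dy.prod (D1my.prod (Dxt.prod (Dxt.prod (Da.prod Da))))))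
    (hI2 : Integrable (fun p : Omega6 d => clsLoss h ζ y (XP α xt δ p) (XPP δ p) (XM δ p))
      (Dy.prod (D1my.prod (Dxt.prod (Dxt.prod (Da.prod Da)))))) :
    ∫ p, lcont h (simZ ζ) (XP α xt δ p) (XPP δ p) (XM δ p)
        ∂(Dy.prod (D1my.prod (Dxt.prod (Dxt.prod (Da.prod Da)))))
      = ∫ p, clsLoss h ζ y (XP α xt δ p) (XPP δ p) (XM δ p)
        ∂(Dy.prod (D1my.prod (Dxt.prod (Dxt.prod (Da.prod Da))))) :=
  stmt3_general y hy Dy D1my Dxt Da α xt δ h ζ hζ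
end

section
/- Fix y ∈ {0,1}. Let D_y be a probability measure on ℝ^d, D_{x̃} a probability measure on ℝ^d, D_α a probability measure on ℝ; fix α ∈ ℝ, x̃ ∈ ℝ^d, δ : ℝ^d × ℝ^d → ℝ^d, h : ℝ^d → ℝ^m, and ζ : ℝ^m → ℝ with ζ(h(z)) ≠ 0 for all z. Let x, x̄ ∼ D_y, x̃', x̃'' ∼ D_{x̃}, α', α'' ∼ D_α, all independent, and set x⁺ := x + α·δ(x, x̃), x⁺⁺ := x + α'·δ(x, x̃'), x⁻ := x̄ + α''·δ(x̄, x̃''). Define u := h(x⁺)/ζ(h(x⁺)), v := h(x⁺⁺)/ζ(h(x⁺⁺)), w := h(x⁻)/ζ(h(x⁻)). Then, assuming all relevant expectations are finite, E[ log( 1 + exp( −uᵀ(v − w) ) ) ] ≥ log( 1 + exp( −C ) ), where C := Σ_{k=1}^m Cov(u_k, v_k) is the sum over coordinates of the covariances of corresponding entries of u and v. -/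
/-
Write `φ q = log (1 + exp (-q))`. Since `φ' q = -(exp q + 1)⁻¹` is increasing, `φ` is convex, and
Jensen's inequality gives `E[φ(uᵀ(v - w))] ≥ φ(E[uᵀ(v - w)])`. The pair `(x̄, w)` is independent of
`(x, u)`, so `E[u_k w_k] = E[u_k] E[w_k]`; and swapping the two independent samples
`(x, x̃', α') ↔ (x̄, x̃'', α'')` preserves the product measure and turns `v` into `w`, so
`E[w_k] = E[v_k]`. Hence `E[uᵀ(v - w)] = Σ_k (E[u_k v_k] - E[u_k] E[v_k]) = C`.
-/

open MeasureTheory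

/-- `z ↦ h(z)/ζ(h(z))`. -/
noncomputable def nrm {d m : ℕ} (h : (Fin d → ℝ) → (Fin m → ℝ)) (ζ : (Fin m → ℝ) → ℝ)
    (z : Fin d → ℝ) : Fin m → ℝ :=
  fun k => h z k / ζ (h z)

/-- `u := h(x⁺)/ζ(h(x⁺))` where `x⁺ := x + α·δ(x, x̃)`. -/
noncomputable def Uvec {d m : ℕ} (h : (Fin d → ℝ) → (Fin m → ℝ)) (ζ : (Fin m → ℝ) → ℝ)
    (α : ℝ) (xt : Fin d → ℝ) (δ : (Fin d → ℝ) → (Fin d → ℝ) → (Fin d → ℝ))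
    (p : Omega6 d) : Fin m → ℝ :=
  nrm h ζ (p.1 + α • δ p.1 xt)

/-- `v := h(x⁺⁺)/ζ(h(x⁺⁺))` where `x⁺⁺ := x + α'·δ(x, x̃')`. -/
noncomputable def Vvec {d m : ℕ} (h : (Fin d → ℝ) → (Fin m → ℝ)) (ζ : (Fin m → ℝ) → ℝ)
    (δ : (Fin d → ℝ) → (Fin d → ℝ) → (Fin d → ℝ)) (p : Omega6 d) : Fin m → ℝ :=
  nrm h ζ (p.1 + p.2.2.2.2.1 • δ p.1 p.2.2.1)

/-- `w := h(x⁻)/ζ(h(x⁻))` where `x⁻ := x̄ + α''·δ(x̄, x̃'')`. -/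
noncomputable def Wvec {d m : ℕ} (h : (Fin d → ℝ) → (Fin m → ℝ)) (ζ : (Fin m → ℝ) → ℝ)
    (δ : (Fin d → ℝ) → (Fin d → ℝ) → (Fin d → ℝ)) (p : Omega6 d) : Fin m → ℝ :=
  nrm h ζ (p.2.1 + p.2.2.2.2.2 • δ p.2.1 p.2.2.2.1)

open Real Set

lemma hasDerivAt_log_one_add_exp_neg (q : ℝ) :
    HasDerivAt (fun x => log (1 + exp (-x))) (-(exp q + 1)⁻¹) q := by
  have hexp : HasDerivAt (fun x => 1 + exp (-x)) (-exp (-q)) q := by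
    simpa using ((hasDerivAt_neg q).exp).const_add 1
  convert hexp.log (by positivity) using 1
  rw [exp_neg]
  field_simp

lemma convexOn_log_one_add_exp_neg : ConvexOn ℝ univ (fun q : ℝ => log (1 + exp (-q))) := by
  refine Monotone.convexOn_univ_of_deriv
    (fun q => (hasDerivAt_log_one_add_exp_neg q).differentiableAt) ?_
  rw [funext fun q => (hasDerivAt_log_one_add_exp_neg q).deriv]
  intro a b hab
  have : exp a + 1 ≤ exp b + 1 := by gcongr
  simpa using inv_anti₀ (by positivity) this

lemma log_one_add_exp_neg_integral_le {Ω : Type*} [MeasurableSpace Ω] {μ : Measure Ω}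
    [IsProbabilityMeasure μ] {f : Ω → ℝ} (hf : Integrable f μ)
    (hφf : Integrable (fun p => log (1 + exp (-f p))) μ) :
    log (1 + exp (-∫ p, f p ∂μ)) ≤ ∫ p, log (1 + exp (-f p)) ∂μ :=
  convexOn_log_one_add_exp_neg.map_integral_le
    (fun q _ => (hasDerivAt_log_one_add_exp_neg q).continuousAt.continuousWithinAt)
    isClosed_univ (Filter.Eventually.of_forall fun _ => trivial) hf hφf

lemma integral_fst_mul_snd {α β : Type*} [MeasurableSpace α] [MeasurableSpace β]
    {μ : Measure α} {ν : Measure β} [IsProbabilityMeasure μ] [IsProbabilityMeasure ν]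
    (f : α → ℝ) (g : β → ℝ) :
    ∫ z, f z.1 * g z.2 ∂μ.prod ν = (∫ z, f z.1 ∂μ.prod ν) * ∫ z, g z.2 ∂μ.prod ν := by
  simp [integral_prod_mul, integral_fun_fst, integral_fun_snd]

lemma integral_sum_mul_sub_of_uncorrelated {Ω ι : Type*} [MeasurableSpace Ω] [Fintype ι]
    {μ : Measure Ω} {u v w : Ω → ι → ℝ}
    (huv : ∀ k, Integrable (fun p => u p k * v p k) μ)
    (huw : ∀ k, Integrable (fun p => u p k * w p k) μ)
    (huw_eq : ∀ k, ∫ p, u p k * w p k ∂μ = (∫ p, u p k ∂μ) * ∫ p, w p k ∂μ)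
    (hw_eq : ∀ k, ∫ p, w p k ∂μ = ∫ p, v p k ∂μ) :
    ∫ p, ∑ k, u p k * (v p k - w p k) ∂μ
      = ∑ k, ((∫ p, u p k * v p k ∂μ) - (∫ p, u p k ∂μ) * ∫ p, v p k ∂μ) := by
  simp_rw [mul_sub]
  refine (integral_finsetSum _ fun k _ => (huv k).sub (huw k)).trans
    (Finset.sum_congr rfl fun k _ => ?_)
  exact (integral_sub (huv k) (huw k)).trans (by rw [huw_eq, hw_eq])

def MeasurableEquiv.prodLeftComm (α β γ : Type*) [MeasurableSpace α] [MeasurableSpace β]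
    [MeasurableSpace γ] : α × β × γ ≃ᵐ β × α × γ :=
  prodAssoc.symm.trans ((prodComm.prodCongr (refl γ)).trans prodAssoc)

lemma measurePreserving_prodLeftComm {α β γ : Type*} [MeasurableSpace α] [MeasurableSpace β]
    [MeasurableSpace γ] (μ : Measure α) (ν : Measure β) (ρ : Measure γ)
    [SFinite μ] [SFinite ν] [SFinite ρ] :
    MeasurePreserving (MeasurableEquiv.prodLeftComm α β γ) (μ.prod (ν.prod ρ))
      (ν.prod (μ.prod ρ)) :=
  (measurePreserving_prodAssoc ν μ ρ).comp
    ((Measure.measurePreserving_swap.prod (MeasurePreserving.id ρ)).comp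
      ((measurePreserving_prodAssoc μ ν ρ).symm MeasurableEquiv.prodAssoc))

open MeasurableEquiv in
/-- `(x, x̄, x̃', x̃'', α', α'') ↦ (x̄, x, x̃'', x̃', α'', α')`. -/
def swapSamples (d : ℕ) : Omega6 d ≃ᵐ Omega6 d :=
  (prodLeftComm _ _ _).trans <| (MeasurableEquiv.refl _).prodCongr <|
    (MeasurableEquiv.refl _).prodCongr <| (prodLeftComm _ _ _).trans <|
      (MeasurableEquiv.refl _).prodCongr <| (MeasurableEquiv.refl _).prodCongr prodComm

section Samples

variable {d m : ℕ} (Dy Dxt : Measure (Fin d → ℝ)) (Da : Measure ℝ)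
  (h : (Fin d → ℝ) → (Fin m → ℝ)) (ζ : (Fin m → ℝ) → ℝ)
  (δ : (Fin d → ℝ) → (Fin d → ℝ) → (Fin d → ℝ))

lemma measurePreserving_swapSamples [SFinite Dy] [SFinite Dxt] [SFinite Da] :
    MeasurePreserving (swapSamples d) (Dy.prod (Dy.prod (Dxt.prod (Dxt.prod (Da.prod Da)))))
      (Dy.prod (Dy.prod (Dxt.prod (Dxt.prod (Da.prod Da))))) := by
  have swap_alphas := (MeasurePreserving.id Dy).prod <| (MeasurePreserving.id Dy).prod <|
    (MeasurePreserving.id Dxt).prod <| (MeasurePreserving.id Dxt).prod <|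
      Measure.measurePreserving_swap (μ := Da) (ν := Da)
  have swap_tildes := (MeasurePreserving.id Dy).prod <| (MeasurePreserving.id Dy).prod <|
    measurePreserving_prodLeftComm Dxt Dxt (Da.prod Da)
  exact swap_alphas.comp <| swap_tildes.comp <| measurePreserving_prodLeftComm _ _ _

lemma Vvec_swapSamples (p : Omega6 d) : Vvec h ζ δ (swapSamples d p) = Wvec h ζ δ p :=
  rfl

lemma integral_Wvec_eq_integral_Vvec [SFinite Dy] [SFinite Dxt] [SFinite Da] (k : Fin m) :
    ∫ p, Wvec h ζ δ p k ∂(Dy.prod (Dy.prod (Dxt.prod (Dxt.prod (Da.prod Da)))))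
      = ∫ p, Vvec h ζ δ p k ∂(Dy.prod (Dy.prod (Dxt.prod (Dxt.prod (Da.prod Da))))) := by
  simp_rw [← Vvec_swapSamples]
  exact (measurePreserving_swapSamples Dy Dxt Da).integral_comp' (fun p => Vvec h ζ δ p k)

lemma integral_Uvec_mul_Wvec [IsProbabilityMeasure Dy] [IsProbabilityMeasure Dxt]
    [IsProbabilityMeasure Da] (α : ℝ) (xt : Fin d → ℝ) (k : Fin m) :
    ∫ p, Uvec h ζ α xt δ p k * Wvec h ζ δ p k
        ∂(Dy.prod (Dy.prod (Dxt.prod (Dxt.prod (Da.prod Da)))))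
      = (∫ p, Uvec h ζ α xt δ p k ∂(Dy.prod (Dy.prod (Dxt.prod (Dxt.prod (Da.prod Da))))))
        * ∫ p, Wvec h ζ δ p k ∂(Dy.prod (Dy.prod (Dxt.prod (Dxt.prod (Da.prod Da))))) :=
  integral_fst_mul_snd (fun x => nrm h ζ (x + α • δ x xt) k)
    (fun q : (Fin d → ℝ) × (Fin d → ℝ) × (Fin d → ℝ) × ℝ × ℝ =>
      nrm h ζ (q.1 + q.2.2.2.2 • δ q.1 q.2.2.1) k)

end Samples

theorem stmt5_general {d m : ℕ}
    (Dy Dxt : Measure (Fin d → ℝ)) (Da : Measure ℝ)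
    [IsProbabilityMeasure Dy] [IsProbabilityMeasure Dxt] [IsProbabilityMeasure Da]
    (α : ℝ) (xt : Fin d → ℝ)
    (δ : (Fin d → ℝ) → (Fin d → ℝ) → (Fin d → ℝ))
    (h : (Fin d → ℝ) → (Fin m → ℝ))
    (ζ : (Fin m → ℝ) → ℝ)
    (hImain : Integrable (fun p : Omega6 d =>
        Real.log (1 + Real.exp (-(∑ k, Uvec h ζ α xt δ p k *
          (Vvec h ζ δ p k - Wvec h ζ δ p k)))))
      (Dy.prod (Dy.prod (Dxt.prod (Dxt.prod (Da.prod Da))))))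
    (hIUV : ∀ k, Integrable (fun p : Omega6 d => Uvec h ζ α xt δ p k * Vvec h ζ δ p k)
      (Dy.prod (Dy.prod (Dxt.prod (Dxt.prod (Da.prod Da))))))
    (hIUW : ∀ k, Integrable (fun p : Omega6 d => Uvec h ζ α xt δ p k * Wvec h ζ δ p k)
      (Dy.prod (Dy.prod (Dxt.prod (Dxt.prod (Da.prod Da)))))) :
    ∫ p, Real.log (1 + Real.exp (-(∑ k, Uvec h ζ α xt δ p k *
          (Vvec h ζ δ p k - Wvec h ζ δ p k))))
        ∂(Dy.prod (Dy.prod (Dxt.prod (Dxt.prod (Da.prod Da)))))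
      ≥ Real.log (1 + Real.exp (-(∑ k,
          ((∫ p, Uvec h ζ α xt δ p k * Vvec h ζ δ p k
              ∂(Dy.prod (Dy.prod (Dxt.prod (Dxt.prod (Da.prod Da))))))
            - (∫ p, Uvec h ζ α xt δ p k
                ∂(Dy.prod (Dy.prod (Dxt.prod (Dxt.prod (Da.prod Da))))))
              * (∫ p, Vvec h ζ δ p k
                  ∂(Dy.prod (Dy.prod (Dxt.prod (Dxt.prod (Da.prod Da)))))))))) := by
  rw [ge_iff_le, ← integral_sum_mul_sub_of_uncorrelated hIUV hIUW
    (integral_Uvec_mul_Wvec Dy Dxt Da h ζ δ α xt) (integral_Wvec_eq_integral_Vvec Dy Dxt Da h ζ δ)]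
  refine log_one_add_exp_neg_integral_le ?_ hImain
  simp_rw [mul_sub]
  exact integrable_finsetSum _ fun k _ => (hIUV k).sub (hIUW k)

/-- With `x, x̄ ∼ D_y`, `x̃', x̃'' ∼ D_{x̃}`, `α', α'' ∼ D_α` all independent, and
`u, v, w` the normalized encodings of `x⁺, x⁺⁺, x⁻`,
`E[ log(1 + exp(−uᵀ(v − w))) ] ≥ log(1 + exp(−C))` where
`C = Σ_k Cov(u_k, v_k) = Σ_k (E[u_k v_k] − E[u_k]·E[v_k])`. -/
theorem stmt5 {d m : ℕ} (y : ℝ) (hy : y = 0 ∨ y = 1)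
    (Dy Dxt : Measure (Fin d → ℝ)) (Da : Measure ℝ)
    [IsProbabilityMeasure Dy] [IsProbabilityMeasure Dxt] [IsProbabilityMeasure Da]
    (α : ℝ) (xt : Fin d → ℝ)
    (δ : (Fin d → ℝ) → (Fin d → ℝ) → (Fin d → ℝ))
    (h : (Fin d → ℝ) → (Fin m → ℝ))
    (ζ : (Fin m → ℝ) → ℝ) (hζ : ∀ z, ζ (h z) ≠ 0)
    (hImain : Integrable (fun p : Omega6 d =>
        Real.log (1 + Real.exp (-(∑ k, Uvec h ζ α xt δ p k *
          (Vvec h ζ δ p k - Wvec h ζ δ p k)))))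
      (Dy.prod (Dy.prod (Dxt.prod (Dxt.prod (Da.prod Da))))))
    (hIU : ∀ k, Integrable (fun p : Omega6 d => Uvec h ζ α xt δ p k)
      (Dy.prod (Dy.prod (Dxt.prod (Dxt.prod (Da.prod Da))))))
    (hIV : ∀ k, Integrable (fun p : Omega6 d => Vvec h ζ δ p k)
      (Dy.prod (Dy.prod (Dxt.prod (Dxt.prod (Da.prod Da))))))
    (hIW : ∀ k, Integrable (fun p : Omega6 d => Wvec h ζ δ p k)
      (Dy.prod (Dy.prod (Dxt.prod (Dxt.prod (Da.prod Da))))))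
    (hIUV : ∀ k, Integrable (fun p : Omega6 d => Uvec h ζ α xt δ p k * Vvec h ζ δ p k)
      (Dy.prod (Dy.prod (Dxt.prod (Dxt.prod (Da.prod Da))))))
    (hIUW : ∀ k, Integrable (fun p : Omega6 d => Uvec h ζ α xt δ p k * Wvec h ζ δ p k)
      (Dy.prod (Dy.prod (Dxt.prod (Dxt.prod (Da.prod Da)))))) :
    ∫ p, Real.log (1 + Real.exp (-(∑ k, Uvec h ζ α xt δ p k *
          (Vvec h ζ δ p k - Wvec h ζ δ p k))))
        ∂(Dy.prod (Dy.prod (Dxt.prod (Dxt.prod (Da.prod Da)))))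
      ≥ Real.log (1 + Real.exp (-(∑ k,
          ((∫ p, Uvec h ζ α xt δ p k * Vvec h ζ δ p k
              ∂(Dy.prod (Dy.prod (Dxt.prod (Dxt.prod (Da.prod Da))))))
            - (∫ p, Uvec h ζ α xt δ p k
                ∂(Dy.prod (Dy.prod (Dxt.prod (Dxt.prod (Da.prod Da))))))
              * (∫ p, Vvec h ζ δ p k
                  ∂(Dy.prod (Dy.prod (Dxt.prod (Dxt.prod (Da.prod Da)))))))))) :=
  stmt5_general Dy Dxt Da α xt δ h ζ hImain hIUV hIUW
end

section
/- (Mixup-noise regularization identity.) Let y ∈ {0,1}, let f : ℝ^d → ℝ be twice continuously differentiable, and let x ∈ ℝ^d with x ≠ 0 and ∇f(x) ≠ 0, satisfying f(x) = ∇f(x)ᵀx, ∇²f(x) = 0, and y·f(x) + (y−1)·f(x) ≥ 0. Let x̃ be a random vector in ℝ^d whose law has compact support, with E[x̃] = 0 and second-moment matrix Σ̃ := E[x̃ x̃ᵀ]. For α > 0 set x⁺ := x + α·(x̃ − x). Then E_{x̃}[ ℓ(f(x⁺), y) ] = ℓ(f(x), y) + c₁(x)·‖∇f(x)‖ + c₂(x)·‖∇f(x)‖²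 + c₃(x)·∇f(x)ᵀ Σ̃ ∇f(x) + r(α), where c₁(x) := α·|y − ψ(f(x))|·|cos(∇f(x), x)|·‖x‖ ≥ 0, c₂(x) := (α²/2)·ψ'(f(x))·cos(∇f(x), x)²·‖x‖² ≥ 0, c₃(x) := (α²/2)·ψ'(f(x)) > 0, cos(a, b) := aᵀb/(‖a‖·‖b‖) is the cosine similarity, ψ'(q) = ψ(q)(1−ψ(q)), and r : (0,∞) → ℝ satisfies lim_{α→0⁺} r(α)/α² = 0. -/
open MeasureTheory Filter
open scoped RealInnerProductSpace

/-- The logistic function `ψ(q) = exp(q)/(1+exp(q))`. -/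
noncomputable def psi (q : ℝ) : ℝ := Real.exp q / (1 + Real.exp q)

/-- Cosine similarity `cos(a,b) = aᵀb/(‖a‖·‖b‖)`. -/
noncomputable def cosSim {E : Type*} [NormedAddCommGroup E] [InnerProductSpace ℝ E]
    (a b : E) : ℝ :=
  ⟪a, b⟫ / (‖a‖ * ‖b‖)

/-!
Expand `a ↦ ℓ(f(x + a • (z - x)), y)` to second order at `a = 0` for each `z`. By Taylor's
theorem with Lagrange remainder, continuity of the second derivative in `(a, z)` and compactness
of the support `K`, the remainder is `o(a²)` uniformly for `z ∈ K`, so it stays `o(a²)` after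
integration. Since `E z = 0`, the first-order coefficient integrates to
`(y - ψ(f x)) ⟪∇f x, x⟫ = (y - ψ(f x)) f x`, which is nonnegative for a correctly classified
point and hence equals `|y - ψ(f x)| |cos(∇f x, x)| ‖x‖ ‖∇f x‖`. As the Hessian vanishes, the
second-order coefficient integrates to `ψ'(f x) E[⟪∇f x, z - x⟫²] = ψ'(f x) (∇f xᵀ Σ̃ ∇f x + ⟪∇f x, x⟫²)`.
-/

open Set Asymptotics Topology

lemma psi_pos (q : ℝ) : 0 < psi q := by
  unfold psi; positivity

lemma psi_lt_one (q : ℝ) : psi q < 1 := by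
  unfold psi
  rw [div_lt_one (by positivity)]
  linarith

lemma hasDerivAt_psi (q : ℝ) : HasDerivAt psi (psi q * (1 - psi q)) q := by
  have h : 1 + Real.exp q ≠ 0 := by positivity
  refine ((Real.hasDerivAt_exp q).div ((Real.hasDerivAt_exp q).const_add 1) h).congr_deriv ?_
  unfold psi
  field_simp

lemma continuous_psi : Continuous psi :=
  continuous_iff_continuousAt.2 fun q => (hasDerivAt_psi q).continuousAt

lemma bce_eq_log_one_add_exp (q y : ℝ) : bce q y = Real.log (1 + Real.exp (-q)) + (1 - y) * q := by
  have h : 1 - 1 / (1 + Real.exp (-q)) = Real.exp (-q) / (1 + Real.exp (-q)) := by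
    field_simp
    ring
  rw [bce, h, one_div, Real.log_inv, Real.log_div (by positivity) (by positivity), Real.log_exp]
  ring

lemma hasDerivAt_bce (q y : ℝ) : HasDerivAt (fun q => bce q y) (psi q - y) q := by
  have hexp : HasDerivAt (fun t => 1 + Real.exp (-t)) (-Real.exp (-q)) q := by
    simpa using ((Real.hasDerivAt_exp (-q)).comp q (hasDerivAt_neg q)).const_add 1
  have hbce : (fun q => bce q y) = fun t => Real.log (1 + Real.exp (-t)) + (1 - y) * t :=
    funext fun t => bce_eq_log_one_add_exp t y
  rw [hbce]
  refine ((hexp.log (by positivity)).add ((hasDerivAt_id q).const_mul (1 - y))).congr_deriv ?_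
  rw [psi, Real.exp_neg]
  field_simp
  ring

lemma continuous_bce (y : ℝ) : Continuous fun q => bce q y :=
  continuous_iff_continuousAt.2 fun q => (hasDerivAt_bce q y).continuousAt

lemma sub_psi_mul_nonneg {y q : ℝ} (hy : y = 0 ∨ y = 1) (hq : 0 ≤ y * q + (y - 1) * q) :
    0 ≤ (y - psi q) * q := by
  rcases hy with rfl | rfl <;> nlinarith [psi_pos q, psi_lt_one q]

lemma cosSim_mul_norm_mul_norm {E : Type*} [NormedAddCommGroup E] [InnerProductSpace ℝ E]
    (a b : E) : cosSim a b * (‖a‖ * ‖b‖) = ⟪a, b⟫ := by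
  rcases eq_or_ne a 0 with rfl | ha
  · simp
  rcases eq_or_ne b 0 with rfl | hb
  · simp
  rw [cosSim, div_mul_cancel₀ _ (by positivity)]

lemma exists_eq_taylor_two_lagrange {h h' h'' : ℝ → ℝ} (hh : ∀ t, HasDerivAt h (h' t) t)
    (hh' : ∀ t, HasDerivAt h' (h'' t) t) {a : ℝ} (ha : 0 < a) :
    ∃ t ∈ Ioo 0 a, h a = h 0 + a * h' 0 + a ^ 2 / 2 * h'' t := by
  -- Rolle's theorem for `φ t = h a - (h t + (a - t) h' t + M (a - t)² / 2)`, with `M` chosen so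
  -- that `φ 0 = 0`; since `φ' t = (a - t) (M - h'' t)`, this finds `M = h'' t`.
  set M := (h a - h 0 - a * h' 0) * 2 / a ^ 2 with hM
  set φ : ℝ → ℝ := fun t => h a - (h t + (a - t) * h' t + M * (a - t) ^ 2 / 2)
  have hφ : ∀ t, HasDerivAt φ ((a - t) * (M - h'' t)) t := fun t => by
    have hl : HasDerivAt (fun t : ℝ => a - t) (-1) t := (hasDerivAt_id t).const_sub a
    have hsq : HasDerivAt (fun t => M * (a - t) ^ 2 / 2) (M * (2 * (a - t) * -1) / 2) t := by
      simpa using ((hl.fun_pow 2).const_mul M).div_const 2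
    have hprod : HasDerivAt (fun t => (a - t) * h' t) (-1 * h' t + (a - t) * h'' t) t :=
      hl.mul (hh' t)
    refine ((((hh t).add hprod).add hsq).const_sub (h a)).congr_deriv ?_
    ring
  obtain ⟨t, ht, hφt⟩ := exists_hasDerivAt_eq_zero ha
    (fun t _ => (hφ t).continuousAt.continuousWithinAt)
    (by simp only [φ, hM]; field_simp; ring) (fun t _ => hφ t)
  have hMt : M = h'' t := by
    have : a - t ≠ 0 := sub_ne_zero.2 ht.2.ne'
    linarith [(mul_eq_zero.1 hφt).resolve_left this]
  refine ⟨t, ht, ?_⟩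
  rw [← hMt, hM]
  field_simp
  ring

section Taylor

variable {α : Type*} [TopologicalSpace α] {g g₁ g₂ : ℝ → α → ℝ}

theorem eventually_abs_taylor_two_remainder_le (hg : ∀ z t, HasDerivAt (g · z) (g₁ t z) t)
    (hg₁ : ∀ z t, HasDerivAt (g₁ · z) (g₂ t z) t) (hg₂ : Continuous (Function.uncurry g₂))
    {K : Set α} (hK : IsCompact K) {ε : ℝ} (hε : 0 < ε) :
    ∀ᶠ a in 𝓝[>] 0, ∀ z ∈ K,
      |g a z - (g 0 z + a * g₁ 0 z + a ^ 2 / 2 * g₂ 0 z)| ≤ ε * a ^ 2 := by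
  obtain ⟨v, hv, hvK⟩ := hK.mem_uniformity_of_prod hg₂.continuousOn (mem_univ (0 : ℝ))
    (Metric.dist_mem_uniformity hε)
  rw [nhdsWithin_univ] at hv
  obtain ⟨δ, hδ, hδv⟩ := Metric.mem_nhds_iff.1 hv
  filter_upwards [Ioo_mem_nhdsGT hδ] with a ha z hz
  obtain ⟨t, ht, hgt⟩ := exists_eq_taylor_two_lagrange (hg z) (hg₁ z) ha.1
  have htv : t ∈ v := hδv <| by
    rw [Metric.mem_ball, Real.dist_eq, sub_zero, abs_of_pos ht.1]
    exact ht.2.trans ha.2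
  have hclose : |g₂ t z - g₂ 0 z| < ε := hvK t htv z hz
  calc |g a z - (g 0 z + a * g₁ 0 z + a ^ 2 / 2 * g₂ 0 z)|
      = |a ^ 2 / 2 * (g₂ t z - g₂ 0 z)| := by rw [hgt]; congr 1; ring
    _ = a ^ 2 / 2 * |g₂ t z - g₂ 0 z| := by rw [abs_mul, abs_of_nonneg (by positivity)]
    _ ≤ ε * a ^ 2 := by nlinarith [abs_nonneg (g₂ t z - g₂ 0 z)]

variable [MeasurableSpace α] [OpensMeasurableSpace α] {μ : Measure α} [IsFiniteMeasure μ]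
  {K : Set α}

lemma Continuous.integrable_of_ae_mem_compact {E : Type*} [NormedAddCommGroup E]
    [SecondCountableTopologyEither α E] {φ : α → E} (hφ : Continuous φ) (hK : IsCompact K)
    (hμK : ∀ᵐ z ∂μ, z ∈ K) : Integrable φ μ := by
  obtain ⟨C, hC⟩ := hK.exists_bound_of_continuousOn hφ.continuousOn
  exact Integrable.of_bound hφ.aestronglyMeasurable C (hμK.mono hC)

theorem isLittleO_integral_taylor_two (hg : ∀ z t, HasDerivAt (g · z) (g₁ t z) t)
    (hg₁ : ∀ z t, HasDerivAt (g₁ · z) (g₂ t z) t) (hg₂ : Continuous (Function.uncurry g₂))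
    (hgc : ∀ t, Continuous (g t)) (hg₁c : Continuous (g₁ 0)) (hK : IsCompact K)
    (hμK : ∀ᵐ z ∂μ, z ∈ K) :
    (fun a => ∫ z, g a z ∂μ - (∫ z, g 0 z ∂μ + a * ∫ z, g₁ 0 z ∂μ + a ^ 2 / 2 * ∫ z, g₂ 0 z ∂μ))
      =o[𝓝[>] 0] fun a => a ^ 2 := by
  have hint : ∀ {φ : α → ℝ}, Continuous φ → Integrable φ μ :=
    fun hφ => hφ.integrable_of_ae_mem_compact hK hμK
  have hg₂c : Continuous (g₂ 0) := hg₂.comp (Continuous.prodMk_right 0)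
  refine isLittleO_iff.2 fun c hc => ?_
  have hε : 0 < c / (μ.real univ + 1) := by positivity
  filter_upwards [eventually_abs_taylor_two_remainder_le hg hg₁ hg₂ hK hε] with a ha
  have hsplit : ∫ z, (g a z - (g 0 z + a * g₁ 0 z + a ^ 2 / 2 * g₂ 0 z)) ∂μ
      = ∫ z, g a z ∂μ - (∫ z, g 0 z ∂μ + a * ∫ z, g₁ 0 z ∂μ + a ^ 2 / 2 * ∫ z, g₂ 0 z ∂μ) := by
    have hga := hgc a
    have hg0 := hgc 0
    rw [integral_sub, integral_add, integral_add, integral_const_mul, integral_const_mul]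
    all_goals exact hint (by fun_prop)
  rw [← hsplit]
  calc ‖∫ z, (g a z - (g 0 z + a * g₁ 0 z + a ^ 2 / 2 * g₂ 0 z)) ∂μ‖
      ≤ c / (μ.real univ + 1) * a ^ 2 * μ.real univ :=
        norm_integral_le_of_norm_le_const (hμK.mono ha)
    _ ≤ c * ‖a ^ 2‖ := by
        rw [Real.norm_eq_abs, abs_of_nonneg (by positivity), div_mul_eq_mul_div,
          div_mul_eq_mul_div, div_le_iff₀ (by positivity)]
        nlinarith [mul_nonneg hc.le (sq_nonneg a)]

end Taylor

section Line

variable {F : Type*} [NormedAddCommGroup F] [NormedSpace ℝ F]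

lemma hasDerivAt_comp_add_smul {G : Type*} [NormedAddCommGroup G] [NormedSpace ℝ G] {f : F → G}
    (x v : F) (t : ℝ) (hf : DifferentiableAt ℝ f (x + t • v)) :
    HasDerivAt (fun t : ℝ => f (x + t • v)) (fderiv ℝ f (x + t • v) v) t := by
  have hline : HasDerivAt (fun t : ℝ => x + t • v) v t := by
    simpa using ((hasDerivAt_id t).smul_const v).const_add x
  exact hf.hasFDerivAt.comp_hasDerivAt t hline

variable {f : F → ℝ} (x v : F) (y t : ℝ)

lemma hasDerivAt_bce_comp_add_smul (hf : Differentiable ℝ f) :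
    HasDerivAt (fun t => bce (f (x + t • v)) y)
      ((psi (f (x + t • v)) - y) * fderiv ℝ f (x + t • v) v) t :=
  (hasDerivAt_bce _ y).comp t (hasDerivAt_comp_add_smul x v t (hf _))

lemma hasDerivAt_psi_sub_mul_fderiv_comp_add_smul (hf : Differentiable ℝ f)
    (hf' : Differentiable ℝ (fderiv ℝ f)) :
    HasDerivAt (fun t => (psi (f (x + t • v)) - y) * fderiv ℝ f (x + t • v) v)
      (psi (f (x + t • v)) * (1 - psi (f (x + t • v))) * fderiv ℝ f (x + t • v) v ^ 2
        + (psi (f (x + t • v)) - y) * fderiv ℝ (fderiv ℝ f) (x + t • v) v v) t := by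
  have hψ : HasDerivAt (fun t => psi (f (x + t • v)) - y)
      (psi (f (x + t • v)) * (1 - psi (f (x + t • v))) * fderiv ℝ f (x + t • v) v) t :=
    ((hasDerivAt_psi _).comp t (hasDerivAt_comp_add_smul x v t (hf _))).sub_const y
  have hDf := (hasDerivAt_comp_add_smul x v t (hf' _)).clm_apply (hasDerivAt_const t v)
  refine (hψ.mul (by simpa using hDf)).congr_deriv ?_
  ring

end Line

section Moments

variable {E : Type*} [NormedAddCommGroup E] [NormedSpace ℝ E] [CompleteSpace E]
  [MeasurableSpace E] {μ : Measure E} [IsProbabilityMeasure μ]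

lemma integral_clm_sub_of_integral_eq_zero (L : E →L[ℝ] ℝ) (x : E)
    (hint : Integrable (fun z => z) μ) (hmean : ∫ z, z ∂μ = 0) :
    ∫ z, L (z - x) ∂μ = -L x := by
  simp_rw [map_sub]
  rw [integral_sub (L.integrable_comp hint) (integrable_const _), L.integral_comp_comm hint, hmean]
  simp

lemma integral_clm_sub_sq_of_integral_eq_zero (L : E →L[ℝ] ℝ) (x : E)
    (hint : Integrable (fun z => z) μ) (hint₂ : Integrable (fun z => L z ^ 2) μ)
    (hmean : ∫ z, z ∂μ = 0) :
    ∫ z, L (z - x) ^ 2 ∂μ = ∫ z, L z ^ 2 ∂μ + L x ^ 2 := by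
  have hexpand : ∀ z, L (z - x) ^ 2 = L z ^ 2 - 2 * L x * L z + L x ^ 2 := fun z => by
    rw [map_sub]
    ring
  have hL : ∫ z, L z ∂μ = 0 := by rw [L.integral_comp_comm hint, hmean, map_zero]
  simp_rw [hexpand]
  have hlin : Integrable (fun z => 2 * L x * L z) μ := (L.integrable_comp hint).const_mul _
  have hquad : Integrable (fun z => L z ^ 2 - 2 * L x * L z) μ := hint₂.sub hlin
  rw [integral_add hquad (integrable_const _), integral_sub hint₂ hlin,
    integral_const_mul, hL]
  simp

end Moments

lemma integral_inner_sq_eq_sum_sum {d : ℕ} {μ : Measure (EuclideanSpace ℝ (Fin d))}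
    (w : EuclideanSpace ℝ (Fin d)) (hint : ∀ i j, Integrable (fun z => z i * z j) μ) :
    ∫ z, ⟪w, z⟫ ^ 2 ∂μ = ∑ i, ∑ j, w i * (∫ z, z i * z j ∂μ) * w j := by
  have hexpand : ∀ z : EuclideanSpace ℝ (Fin d),
      ⟪w, z⟫ ^ 2 = ∑ i, ∑ j, w i * w j * (z i * z j) := fun z => by
    simp only [PiLp.inner_apply, RCLike.inner_apply, conj_trivial, sq, Finset.sum_mul_sum]
    refine Finset.sum_congr rfl fun i _ => Finset.sum_congr rfl fun j _ => by ring
  simp_rw [hexpand]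
  rw [integral_finsetSum _ fun i _ => integrable_finsetSum _ fun j _ => (hint i j).const_mul _]
  refine Finset.sum_congr rfl fun i _ => ?_
  rw [integral_finsetSum _ fun j _ => (hint i j).const_mul _]
  refine Finset.sum_congr rfl fun j _ => ?_
  rw [integral_const_mul]
  ring

theorem isLittleO_integral_bce_mixup {F : Type*} [NormedAddCommGroup F] [NormedSpace ℝ F]
    [MeasurableSpace F] [OpensMeasurableSpace F] {μ : Measure F} [IsProbabilityMeasure μ]
    {f : F → ℝ} (hf : ContDiff ℝ 2 f) (x : F) (y : ℝ) {K : Set F} (hK : IsCompact K)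
    (hμK : ∀ᵐ z ∂μ, z ∈ K) :
    (fun a => ∫ z, bce (f (x + a • (z - x))) y ∂μ
      - (bce (f x) y + a * ∫ z, (psi (f x) - y) * fderiv ℝ f x (z - x) ∂μ
        + a ^ 2 / 2 * ∫ z, (psi (f x) * (1 - psi (f x)) * fderiv ℝ f x (z - x) ^ 2
          + (psi (f x) - y) * fderiv ℝ (fderiv ℝ f) x (z - x) (z - x)) ∂μ))
      =o[𝓝[>] 0] fun a => a ^ 2 := by
  have hf₁ : ContDiff ℝ 1 (fderiv ℝ f) := hf.fderiv_right le_rfl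
  have hc : Continuous f := hf.continuous
  have hc₁ : Continuous (fderiv ℝ f) := hf₁.continuous
  have hc₂ : Continuous (fderiv ℝ (fderiv ℝ f)) := hf₁.continuous_fderiv one_ne_zero
  have hcb := continuous_bce y
  have hcψ := continuous_psi
  have key := isLittleO_integral_taylor_two (μ := μ)
    (g := fun a z => bce (f (x + a • (z - x))) y)
    (g₁ := fun t z => (psi (f (x + t • (z - x))) - y) * fderiv ℝ f (x + t • (z - x)) (z - x))
    (g₂ := fun t z => psi (f (x + t • (z - x))) * (1 - psi (f (x + t • (z - x))))
        * fderiv ℝ f (x + t • (z - x)) (z - x) ^ 2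
      + (psi (f (x + t • (z - x))) - y) * fderiv ℝ (fderiv ℝ f) (x + t • (z - x)) (z - x) (z - x))
    (fun z t => hasDerivAt_bce_comp_add_smul x (z - x) y t (hf.differentiable two_ne_zero))
    (fun z t => hasDerivAt_psi_sub_mul_fderiv_comp_add_smul x (z - x) y t
      (hf.differentiable two_ne_zero) (hf₁.differentiable one_ne_zero))
    (by fun_prop) (fun t => by fun_prop) (by fun_prop) hK hμK
  simpa using key

theorem stmt9_general {d : ℕ} (y : ℝ) (hy : y = 0 ∨ y = 1)
    (f : EuclideanSpace ℝ (Fin d) → ℝ) (hf : ContDiff ℝ 2 f)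
    (x : EuclideanSpace ℝ (Fin d))
    (hlin : f x = ⟪gradient f x, x⟫)
    (hHess : fderiv ℝ (fderiv ℝ f) x = 0)
    (hcls : 0 ≤ y * f x + (y - 1) * f x)
    (μ : Measure (EuclideanSpace ℝ (Fin d))) [IsProbabilityMeasure μ]
    (K : Set (EuclideanSpace ℝ (Fin d))) (hK : IsCompact K) (hKsupp : μ Kᶜ = 0)
    (hmean : ∫ z, z ∂μ = 0) :
    ∃ r : ℝ → ℝ,
      Tendsto (fun a => r a / a ^ 2) (nhdsWithin 0 (Set.Ioi 0)) (nhds 0) ∧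
      ∀ a : ℝ, 0 < a →
        0 ≤ a * |y - psi (f x)| * |cosSim (gradient f x) x| * ‖x‖ ∧
        0 ≤ a ^ 2 / 2 * (psi (f x) * (1 - psi (f x))) * cosSim (gradient f x) x ^ 2 * ‖x‖ ^ 2 ∧
        0 < a ^ 2 / 2 * (psi (f x) * (1 - psi (f x))) ∧
        ∫ z, bce (f (x + a • (z - x))) y ∂μ
          = bce (f x) y
            + a * |y - psi (f x)| * |cosSim (gradient f x) x| * ‖x‖ * ‖gradient f x‖
            + a ^ 2 / 2 * (psi (f x) * (1 - psi (f x))) * cosSim (gradient f x) x ^ 2 * ‖x‖ ^ 2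
                * ‖gradient f x‖ ^ 2
            + a ^ 2 / 2 * (psi (f x) * (1 - psi (f x))) *
                (∑ i, ∑ j, gradient f x i * (∫ z, z i * z j ∂μ) * gradient f x j)
            + r a := by
  set g := gradient f x
  set S := ∑ i, ∑ j, g i * (∫ z, z i * z j ∂μ) * g j
  have hμK : ∀ᵐ z ∂μ, z ∈ K := mem_ae_iff.2 hKsupp
  have hint : ∀ {φ : EuclideanSpace ℝ (Fin d) → ℝ}, Continuous φ → Integrable φ μ :=
    fun hφ => hφ.integrable_of_ae_mem_compact hK hμK
  have hid : Integrable (fun z => z) μ := continuous_id.integrable_of_ae_mem_compact hK hμK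
  have hψ' : 0 < psi (f x) * (1 - psi (f x)) :=
    mul_pos (psi_pos _) (sub_pos.2 (psi_lt_one _))
  have hsign : 0 ≤ (y - psi (f x)) * ⟪g, x⟫ := hlin ▸ sub_psi_mul_nonneg hy hcls
  have h₁ : ∫ z, (psi (f x) - y) * fderiv ℝ f x (z - x) ∂μ = (y - psi (f x)) * ⟪g, x⟫ := by
    rw [integral_const_mul, integral_clm_sub_of_integral_eq_zero _ x hid hmean,
      ← inner_gradient_left]
    ring
  have h₂ : ∫ z, (psi (f x) * (1 - psi (f x)) * fderiv ℝ f x (z - x) ^ 2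
      + (psi (f x) - y) * fderiv ℝ (fderiv ℝ f) x (z - x) (z - x)) ∂μ
      = psi (f x) * (1 - psi (f x)) * (⟪g, x⟫ ^ 2 + S) := by
    simp only [hHess, zero_apply, mul_zero, add_zero]
    rw [integral_const_mul, integral_clm_sub_sq_of_integral_eq_zero _ x hid
      (hint (by fun_prop)) hmean]
    simp_rw [← inner_gradient_left]
    rw [integral_inner_sq_eq_sum_sum g fun i j => hint (by fun_prop)]
    ring
  have hO := isLittleO_integral_bce_mixup hf x y hK hμK
  rw [h₁, h₂] at hO
  refine ⟨_, hO.tendsto_div_nhds_zero, fun a ha => ⟨by positivity, by positivity,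
    by positivity, ?_⟩⟩
  have hc₁ : |y - psi (f x)| * |cosSim g x| * ‖x‖ * ‖g‖ = (y - psi (f x)) * ⟪g, x⟫ := by
    rw [← abs_of_nonneg hsign, ← cosSim_mul_norm_mul_norm, abs_mul, abs_mul, abs_mul, abs_norm,
      abs_norm]
    ring
  have hc₂ : cosSim g x ^ 2 * ‖x‖ ^ 2 * ‖g‖ ^ 2 = ⟪g, x⟫ ^ 2 := by
    rw [← cosSim_mul_norm_mul_norm]
    ring
  linear_combination -a * hc₁ - a ^ 2 / 2 * (psi (f x) * (1 - psi (f x))) * hc₂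

/-- Mixup-noise regularization identity (Theorem 2(i)).  With `x⁺ := x + α·(x̃ − x)` and
`x̃ ∼ μ` a compactly supported probability law with mean `0` and second-moment matrix
`Σ̃_{ij} = E[x̃ᵢ x̃ⱼ]`, for a correctly classified point `x` of a twice continuously
differentiable model `f` with `f(x) = ∇f(x)ᵀx`, `∇²f(x) = 0`:
`E[ℓ(f(x⁺),y)] = ℓ(f(x),y) + c₁·‖∇f(x)‖ + c₂·‖∇f(x)‖² + c₃·∇f(x)ᵀΣ̃∇f(x) + r(α)`
with `r(α)/α² → 0` as `α → 0⁺`, where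
`c₁ = α·|y−ψ(f(x))|·|cos(∇f(x),x)|·‖x‖ ≥ 0`,
`c₂ = (α²/2)·ψ'(f(x))·cos(∇f(x),x)²·‖x‖² ≥ 0`, and `c₃ = (α²/2)·ψ'(f(x)) > 0`. -/
theorem stmt9 {d : ℕ} (y : ℝ) (hy : y = 0 ∨ y = 1)
    (f : EuclideanSpace ℝ (Fin d) → ℝ) (hf : ContDiff ℝ 2 f)
    (x : EuclideanSpace ℝ (Fin d)) (hx : x ≠ 0) (hgrad : gradient f x ≠ 0)
    (hlin : f x = ⟪gradient f x, x⟫)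
    (hHess : fderiv ℝ (fderiv ℝ f) x = 0)
    (hcls : 0 ≤ y * f x + (y - 1) * f x)
    (μ : Measure (EuclideanSpace ℝ (Fin d))) [IsProbabilityMeasure μ]
    (K : Set (EuclideanSpace ℝ (Fin d))) (hK : IsCompact K) (hKsupp : μ Kᶜ = 0)
    (hmean : ∫ z, z ∂μ = 0) :
    ∃ r : ℝ → ℝ,
      Tendsto (fun a => r a / a ^ 2) (nhdsWithin 0 (Set.Ioi 0)) (nhds 0) ∧
      ∀ a : ℝ, 0 < a →
        0 ≤ a * |y - psi (f x)| * |cosSim (gradient f x) x| * ‖x‖ ∧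
        0 ≤ a ^ 2 / 2 * (psi (f x) * (1 - psi (f x))) * cosSim (gradient f x) x ^ 2 * ‖x‖ ^ 2 ∧
        0 < a ^ 2 / 2 * (psi (f x) * (1 - psi (f x))) ∧
        ∫ z, bce (f (x + a • (z - x))) y ∂μ
          = bce (f x) y
            + a * |y - psi (f x)| * |cosSim (gradient f x) x| * ‖x‖ * ‖gradient f x‖
            + a ^ 2 / 2 * (psi (f x) * (1 - psi (f x))) * cosSim (gradient f x) x ^ 2 * ‖x‖ ^ 2
                * ‖gradient f x‖ ^ 2
            + a ^ 2 / 2 * (psi (f x) * (1 - psi (f x))) *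
                (∑ i, ∑ j, gradient f x i * (∫ z, z i * z j ∂μ) * gradient f x j)
            + r a :=
  stmt9_general y hy f hf x hlin hHess hcls μ K hK hKsupp hmean
end

section
/- (Expected Rademacher complexity of the Mixup-constrained linear class.) Let μ be a probability distribution on ℝ^d with finite second moments such that Σ := E_{x∼μ}[x xᵀ] is invertible, let b > 0, let x₁, …, x_n be i.i.d. draws from μ, and let ξ₁, …, ξ_n be independent Rademacher random variables (each uniform on {−1, +1}), independent of the sample. Then E_{x₁,…,x_n}[ E_ξ[ sup_{w : wᵀΣw ≤ b} (1/n)·Σ_{i=1}^n ξ_i·wᵀx_i ] ] ≤ √( b·d / n ). -/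
open MeasureTheory

/-- The (uncentered) second-moment matrix `Σ = E_{x∼μ}[x xᵀ]`. -/
noncomputable def mom {d : ℕ} (μ : Measure (Fin d → ℝ)) : Matrix (Fin d) (Fin d) ℝ :=
  Matrix.of fun i j => ∫ x, x i * x j ∂μ

/-!
By Cauchy–Schwarz in the inner product given by `Σ`, the supremum of `a ⬝ᵥ w` over the ellipsoid
`w ⬝ᵥ Σ *ᵥ w ≤ b` is at most `√(b · a ⬝ᵥ Σ⁻¹ *ᵥ a)`. Taking `a = Σᵢ ξᵢ xᵢ`, Jensen's inequality for
the concave square root moves the averages over the signs and over the sample inside the root;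
the signs are orthogonal, so the average of `a ⬝ᵥ Σ⁻¹ *ᵥ a` over them is `Σᵢ xᵢ ⬝ᵥ Σ⁻¹ *ᵥ xᵢ`,
whose expectation is `n · tr(Σ⁻¹ Σ) = n d`.
-/

open Matrix

section Signs

variable {ι R V : Type*} [Fintype ι] [DecidableEq ι] [CommRing R]

def boolSign (b : Bool) : R := if b then 1 else -1

lemma boolSign_mul_self (b : Bool) : (boolSign b * boolSign b : R) = 1 := by
  cases b <;> simp [boolSign]

lemma sum_boolSign_mul_boolSign (i j : ι) :
    ∑ s : ι → Bool, (boolSign (s i) * boolSign (s j) : R) =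
      if i = j then 2 ^ Fintype.card ι else 0 := by
  split_ifs with hij
  · subst hij
    simp [boolSign_mul_self]
  · -- flipping the `i`-th sign negates the summand
    refine Finset.sum_involution (fun s _ => Function.update s i !(s i)) (fun s _ => ?_)
      (fun s _ _ h => ?_) (by simp) (fun s _ => by simp)
    · rw [Function.update_self, Function.update_of_ne (Ne.symm hij)]
      cases s i <;> cases s j <;> simp [boolSign]
    · simpa using congr_fun h i

lemma sum_bilinForm_signed_sum [AddCommGroup V] [Module R V] (B : LinearMap.BilinForm R V)
    (x : ι → V) :
    ∑ s : ι → Bool, B (∑ i, (boolSign (s i) : R) • x i) (∑ i, (boolSign (s i) : R) • x i) =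
      2 ^ Fintype.card ι * ∑ i, B (x i) (x i) := by
  simp only [map_sum, map_smul, LinearMap.sum_apply, LinearMap.smul_apply,
    smul_eq_mul, Finset.mul_sum]
  calc ∑ s : ι → Bool, ∑ j, ∑ i, boolSign (s j) * (boolSign (s i) * B (x i) (x j))
      = ∑ j, ∑ i, (∑ s : ι → Bool, boolSign (s j) * boolSign (s i)) * B (x i) (x j) := by
        rw [Finset.sum_comm]
        refine Finset.sum_congr rfl fun j _ => ?_
        rw [Finset.sum_comm]
        simp only [Finset.sum_mul, mul_assoc]
    _ = ∑ i, 2 ^ Fintype.card ι * B (x i) (x i) := by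
        simp [sum_boolSign_mul_boolSign, ite_mul]

end Signs

section Ellipsoid

variable {m : Type*} [Fintype m] [DecidableEq m] {M : Matrix m m ℝ}

lemma Matrix.PosSemidef.dotProduct_inv_mulVec_nonneg (hM : M.PosSemidef) (v : m → ℝ) :
    0 ≤ v ⬝ᵥ M⁻¹ *ᵥ v := by
  simpa using hM.inv.dotProduct_mulVec_nonneg v

lemma sq_dotProduct_le_mul (hM : M.PosSemidef) (hdet : IsUnit M.det) (a w : m → ℝ) :
    (a ⬝ᵥ w) ^ 2 ≤ (a ⬝ᵥ M⁻¹ *ᵥ a) * (w ⬝ᵥ M *ᵥ w) := by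
  have hMt : Mᵀ = M := hM.isHermitian
  have hMMinv : M *ᵥ M⁻¹ *ᵥ a = a := by rw [mulVec_mulVec, mul_nonsing_inv M hdet, one_mulVec]
  let B : LinearMap.BilinForm ℝ (m → ℝ) := toLinearMap₂' ℝ M
  have hB : ∀ v w, B v w = v ⬝ᵥ M *ᵥ w := toLinearMap₂'_apply' M
  have hCS := B.apply_mul_apply_le_of_forall_zero_le
    (fun v => by simpa [hB] using hM.dotProduct_mulVec_nonneg v) (M⁻¹ *ᵥ a) w
  simp only [hB] at hCS
  rwa [dotProduct_mulVec, ← mulVec_transpose, hMt, hMMinv, dotProduct_comm w a,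
    dotProduct_comm (M⁻¹ *ᵥ a), ← sq] at hCS

lemma dotProduct_le_sqrt_of_mem_ellipsoid (hM : M.PosSemidef) (hdet : IsUnit M.det)
    {b : ℝ} (a : m → ℝ) {w : m → ℝ} (hw : w ⬝ᵥ M *ᵥ w ≤ b) :
    a ⬝ᵥ w ≤ √(b * (a ⬝ᵥ M⁻¹ *ᵥ a)) := by
  refine (le_abs_self _).trans (Real.abs_le_sqrt ?_)
  calc (a ⬝ᵥ w) ^ 2 ≤ (a ⬝ᵥ M⁻¹ *ᵥ a) * (w ⬝ᵥ M *ᵥ w) := sq_dotProduct_le_mul hM hdet a w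
    _ ≤ b * (a ⬝ᵥ M⁻¹ *ᵥ a) := by
      rw [mul_comm b]
      exact mul_le_mul_of_nonneg_left hw (hM.dotProduct_inv_mulVec_nonneg a)

lemma iSup_ellipsoid_dotProduct_le (hM : M.PosSemidef) (hdet : IsUnit M.det) (b : ℝ)
    (a : m → ℝ) :
    ⨆ w : {w : m → ℝ // w ⬝ᵥ M *ᵥ w ≤ b}, a ⬝ᵥ (w : m → ℝ) ≤ √(b * (a ⬝ᵥ M⁻¹ *ᵥ a)) :=
  Real.iSup_le (fun w => dotProduct_le_sqrt_of_mem_ellipsoid hM hdet a w.2) (Real.sqrt_nonneg _)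

end Ellipsoid

lemma inv_card_mul_sum_sqrt_le {α : Type*} [Fintype α] [Nonempty α] {f : α → ℝ} (hf : 0 ≤ f) :
    (Fintype.card α : ℝ)⁻¹ * ∑ a, √(f a) ≤ √((Fintype.card α : ℝ)⁻¹ * ∑ a, f a) := by
  have hsum : ∑ _a : α, (Fintype.card α : ℝ)⁻¹ = 1 := by simp
  simpa [Finset.mul_sum] using Real.strictConcaveOn_sqrt.concaveOn.le_map_sum
    (t := Finset.univ) (fun _ _ => by positivity) hsum (fun a _ => hf a)

lemma integral_le_sqrt_integral {α : Type*} [MeasurableSpace α] {ν : Measure α}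
    [IsProbabilityMeasure ν] {F G : α → ℝ} (hG : Integrable G ν) (hG0 : 0 ≤ G)
    (hFG : ∀ x, F x ≤ √(G x)) :
    ∫ x, F x ∂ν ≤ √(∫ x, G x ∂ν) := by
  have hsqrt : Integrable (fun x => √(G x)) ν := by
    refine (hG.add (integrable_const 1)).mono'
      (Real.continuous_sqrt.comp_aestronglyMeasurable hG.1) (ae_of_all _ fun x => ?_)
    rw [Real.norm_of_nonneg (Real.sqrt_nonneg _), Pi.add_apply]
    nlinarith [Real.sq_sqrt (hG0 x), Real.sqrt_nonneg (G x)]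
  calc ∫ x, F x ∂ν ≤ ∫ x, √(G x) ∂ν := by
        by_cases hF : Integrable F ν
        · exact integral_mono hF hsqrt hFG
        · rw [integral_undef hF]
          exact integral_nonneg fun x => Real.sqrt_nonneg _
    _ ≤ √(∫ x, G x ∂ν) :=
        Real.strictConcaveOn_sqrt.concaveOn.le_map_integral Real.continuous_sqrt.continuousOn
          isClosed_Ici (ae_of_all _ hG0) hG hsqrt

lemma integrable_sum_comp_eval {ι α : Type*} [Fintype ι] [MeasurableSpace α] {ν : Measure α}
    [IsProbabilityMeasure ν] {f : α → ℝ} (hf : Integrable f ν) :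
    Integrable (fun X => ∑ i, f (X i)) (Measure.pi fun _ : ι => ν) :=
  integrable_finsetSum _ fun _ _ => integrable_comp_eval hf

lemma integral_sum_comp_eval {ι α : Type*} [Fintype ι] [MeasurableSpace α] {ν : Measure α}
    [IsProbabilityMeasure ν] {f : α → ℝ} (hf : Integrable f ν) :
    ∫ X, ∑ i, f (X i) ∂(Measure.pi fun _ : ι => ν) = Fintype.card ι * ∫ x, f x ∂ν := by
  rw [integral_finsetSum _ fun _ _ => integrable_comp_eval hf]
  simp [integral_comp_eval (μ := fun _ : ι => ν) hf.aestronglyMeasurable]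

lemma dotProduct_mulVec_self_eq_sum {m R : Type*} [Fintype m] [CommSemiring R]
    (A : Matrix m m R) (x : m → R) :
    x ⬝ᵥ A *ᵥ x = ∑ i, ∑ j, A i j * (x j * x i) := by
  simp only [dotProduct, mulVec, Finset.mul_sum]
  exact Finset.sum_congr rfl fun i _ => Finset.sum_congr rfl fun j _ => by ring

section SecondMoment

variable {d : ℕ} {μ : Measure (Fin d → ℝ)}
  (hmom : ∀ i j, Integrable (fun x : Fin d → ℝ => x i * x j) μ)
include hmom

lemma integrable_dotProduct_mulVec_self (A : Matrix (Fin d) (Fin d) ℝ) :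
    Integrable (fun x => x ⬝ᵥ A *ᵥ x) μ := by
  simp_rw [dotProduct_mulVec_self_eq_sum]
  exact integrable_finsetSum _ fun i _ => integrable_finsetSum _ fun j _ =>
    (hmom j i).const_mul _

lemma integral_dotProduct_mulVec_self (A : Matrix (Fin d) (Fin d) ℝ) :
    ∫ x, x ⬝ᵥ A *ᵥ x ∂μ = (A * mom μ).trace := by
  simp_rw [dotProduct_mulVec_self_eq_sum]
  have hint : ∀ i j, Integrable (fun x : Fin d → ℝ => A i j * (x j * x i)) μ :=
    fun i j => (hmom j i).const_mul _
  simp only [integral_finsetSum _ fun i _ => integrable_finsetSum _ fun j _ => hint i j,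
    integral_finsetSum _ fun j _ => hint _ j, integral_const_mul]
  simp [trace, mul_apply, mom]

lemma posSemidef_mom : (mom μ).PosSemidef := by
  refine .of_dotProduct_mulVec_nonneg ?_ fun v => ?_
  · ext i j
    simp [mom, mul_comm]
  · have hv : v ⬝ᵥ mom μ *ᵥ v = ∫ x, x ⬝ᵥ vecMulVec v v *ᵥ x ∂μ := by
      rw [integral_dotProduct_mulVec_self hmom, trace_mul_comm, mul_vecMulVec, trace_vecMulVec,
        dotProduct_comm]
    rw [star_trivial, hv]
    refine integral_nonneg fun x => ?_
    simp only [vecMulVec_mulVec, op_smul_eq_smul, dotProduct_smul, smul_eq_mul]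
    rw [dotProduct_comm]
    exact mul_self_nonneg _

lemma integral_dotProduct_inv_mom_mulVec (hinv : IsUnit (mom μ).det) :
    ∫ x, x ⬝ᵥ (mom μ)⁻¹ *ᵥ x ∂μ = d := by
  rw [integral_dotProduct_mulVec_self hmom, nonsing_inv_mul _ hinv, trace_one, Fintype.card_fin]

end SecondMoment

section EmpiricalRademacher

variable {m : Type*} [Fintype m] [DecidableEq m]

/-- The empirical Rademacher complexity of `{x ↦ w ⬝ᵥ x | w ⬝ᵥ M *ᵥ w ≤ b}` on the sample `X`. -/
noncomputable def ellipsoidRademacher (M : Matrix m m ℝ) (b : ℝ) {n : ℕ} (X : Fin n → m → ℝ) :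
    ℝ :=
  (2 ^ n)⁻¹ * ∑ s : Fin n → Bool, ⨆ w : {w : m → ℝ // w ⬝ᵥ M *ᵥ w ≤ b},
    (1 / n : ℝ) * ∑ i, boolSign (s i) * ((w : m → ℝ) ⬝ᵥ X i)

lemma ellipsoidRademacher_le {M : Matrix m m ℝ} (hM : M.PosSemidef) (hdet : IsUnit M.det)
    {b : ℝ} (hb : 0 ≤ b) {n : ℕ} (X : Fin n → m → ℝ) :
    ellipsoidRademacher M b X ≤ √(b / n ^ 2 * ∑ i, X i ⬝ᵥ M⁻¹ *ᵥ X i) := by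
  set a : (Fin n → Bool) → m → ℝ := fun s => ∑ i, (boolSign (s i) : ℝ) • X i
  have hsup : ∀ s, (⨆ w : {w : m → ℝ // w ⬝ᵥ M *ᵥ w ≤ b},
      (1 / n : ℝ) * ∑ i, boolSign (s i) * ((w : m → ℝ) ⬝ᵥ X i)) ≤
        √(b / n ^ 2 * (a s ⬝ᵥ M⁻¹ *ᵥ a s)) := by
    intro s
    have ha : ∀ w : m → ℝ, ∑ i, boolSign (s i) * (w ⬝ᵥ X i) = a s ⬝ᵥ w := fun w => by
      simp [a, sum_dotProduct, dotProduct_comm w]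
    simp_rw [ha, ← Real.mul_iSup_of_nonneg (one_div_nonneg.mpr n.cast_nonneg)]
    calc (1 / n : ℝ) * ⨆ w : {w : m → ℝ // w ⬝ᵥ M *ᵥ w ≤ b}, a s ⬝ᵥ (w : m → ℝ)
        ≤ 1 / n * √(b * (a s ⬝ᵥ M⁻¹ *ᵥ a s)) := by
          gcongr
          exact iSup_ellipsoid_dotProduct_le hM hdet b (a s)
      _ = √(b / n ^ 2 * (a s ⬝ᵥ M⁻¹ *ᵥ a s)) := by
          rw [show b / n ^ 2 * (a s ⬝ᵥ M⁻¹ *ᵥ a s) = (1 / n) ^ 2 * (b * (a s ⬝ᵥ M⁻¹ *ᵥ a s)) by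
            ring, Real.sqrt_mul (sq_nonneg _), Real.sqrt_sq (by positivity)]
  have hcard : (Fintype.card (Fin n → Bool) : ℝ) = 2 ^ n := by simp
  calc ellipsoidRademacher M b X ≤ (2 ^ n)⁻¹ * ∑ s, √(b / n ^ 2 * (a s ⬝ᵥ M⁻¹ *ᵥ a s)) := by
        unfold ellipsoidRademacher
        gcongr with s
        exact hsup s
    _ ≤ √((2 ^ n)⁻¹ * ∑ s, b / n ^ 2 * (a s ⬝ᵥ M⁻¹ *ᵥ a s)) := by
        rw [← hcard]
        exact inv_card_mul_sum_sqrt_le fun s =>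
          mul_nonneg (by positivity) (hM.dotProduct_inv_mulVec_nonneg _)
    _ = √(b / n ^ 2 * ∑ i, X i ⬝ᵥ M⁻¹ *ᵥ X i) := by
        have hsigns := sum_bilinForm_signed_sum (toLinearMap₂' ℝ M⁻¹) X
        simp only [toLinearMap₂'_apply', Fintype.card_fin] at hsigns
        rw [← Finset.mul_sum, hsigns]
        field_simp

end EmpiricalRademacher

theorem stmt13_general {d : ℕ} (n : ℕ)
    (μ : Measure (Fin d → ℝ)) [IsProbabilityMeasure μ]
    (hmom : ∀ i j, Integrable (fun x : Fin d → ℝ => x i * x j) μ)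
    (hinv : IsUnit (mom μ).det)
    (b : ℝ) (hb : 0 < b) :
    ∫ X : Fin n → (Fin d → ℝ),
        (((2 : ℝ) ^ n)⁻¹ *
          ∑ s : Fin n → Bool,
            ⨆ w : {w : Fin d → ℝ // ∑ i, w i * Matrix.mulVec (mom μ) w i ≤ b},
              (1 / (n : ℝ)) *
                ∑ i, (if s i then (1 : ℝ) else -1) * ∑ k, (w : Fin d → ℝ) k * X i k)
        ∂(Measure.pi fun _ : Fin n => μ)
      ≤ Real.sqrt (b * d / n) := by
  have hM : (mom μ).PosSemidef := posSemidef_mom hmom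
  have hq := integrable_dotProduct_mulVec_self hmom (mom μ)⁻¹
  calc ∫ X, ellipsoidRademacher (mom μ) b X ∂(Measure.pi fun _ : Fin n => μ)
      ≤ √(∫ X, b / n ^ 2 * ∑ i, X i ⬝ᵥ (mom μ)⁻¹ *ᵥ X i ∂(Measure.pi fun _ : Fin n => μ)) :=
        integral_le_sqrt_integral
          ((integrable_sum_comp_eval hq).const_mul _)
          (fun X => mul_nonneg (by positivity)
            (Finset.sum_nonneg fun i _ => hM.dotProduct_inv_mulVec_nonneg (X i)))
          (ellipsoidRademacher_le hM hinv hb.le)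
    _ = √(b * d / n) := by
        rw [integral_const_mul, integral_sum_comp_eval hq,
          integral_dotProduct_inv_mom_mulVec hmom hinv, Fintype.card_fin]
        congr 1
        rcases eq_or_ne (n : ℝ) 0 with h | h
        · simp [h]
        · field_simp

/-- Expected Rademacher complexity of the Mixup-constrained linear class
`F = {x ↦ wᵀx : wᵀΣw ≤ b}` with `Σ = E[x xᵀ]` invertible: over an i.i.d. sample
`x₁, …, x_n ∼ μ` and independent Rademacher signs (averaged over all `2^n` sign patterns),
`E[ E_ξ[ sup_{wᵀΣw ≤ b} (1/n)Σᵢ ξᵢ wᵀxᵢ ] ] ≤ √(b·d/n)`. -/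
theorem stmt13 {d : ℕ} (n : ℕ) (hn : 0 < n)
    (μ : Measure (Fin d → ℝ)) [IsProbabilityMeasure μ]
    (hmom : ∀ i j, Integrable (fun x : Fin d → ℝ => x i * x j) μ)
    (hinv : IsUnit (mom μ).det)
    (b : ℝ) (hb : 0 < b) :
    ∫ X : Fin n → (Fin d → ℝ),
        (((2 : ℝ) ^ n)⁻¹ *
          ∑ s : Fin n → Bool,
            ⨆ w : {w : Fin d → ℝ // ∑ i, w i * Matrix.mulVec (mom μ) w i ≤ b},
              (1 / (n : ℝ)) *
                ∑ i, (if s i then (1 : ℝ) else -1) * ∑ k, (w : Fin d → ℝ) k * X i k)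
        ∂(Measure.pi fun _ : Fin n => μ)
      ≤ Real.sqrt (b * d / n) :=
  stmt13_general n μ hmom hinv b hb
end
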